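/- Under the same setting, with ψ¹_{ε,t}(y) = e^{AW(t)}y + ε e^{AW(t)} ∫₀^t e^{−AW(s)} F(e^{AW(s)}y) ds, the first-order Taylor approximation error satisfies |φ_{ε,t}(y) − ψ¹_{ε,t}(y)| ≤ C(1+|y|) e^{Cεt} (εt)² for a constant C independent of ε and t. -/

import Mathlib

/-- Matrix acting on a Euclidean vector. -/
noncomputable def matApply {d : ℕ} (M : Matrix (Fin d) (Fin d) ℝ)
    (x : EuclideanSpace ℝ (Fin d)) : EuclideanSpace ℝ (Fin d) :=
  WithLp.toLp 2 (M.mulVec x)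

/-!
Write `T` for the operator of `A` on `EuclideanSpace ℝ (Fin d)`. Since `exp T = 1`, the map
`c ↦ exp (c • T)` is `1`-periodic, hence bounded in norm by some `B`. For the deviation
`g s = ‖φ s - exp (W s • T) y‖` of the solution from the free flow, the variation-of-constants
equation and the linear growth of `F` give `g s ≤ εBK (1 + B‖y‖) s + εBK ∫₀ˢ g`, so Grönwall's
inequality bounds `∫₀ᵗ g` by `εBK (1 + B‖y‖) t² e^{εBKt}`. Pulling `exp (W t • T)` inside the
integral of `ψ¹` turns the error `φ t - ψ¹ t` into
`ε ∫₀ᵗ exp ((W t - W r) • T) (F (φ r) - F (exp (W r • T) y)) dr`, of norm at most `εBK ∫₀ᵗ g`.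
-/

open MeasureTheory NormedSpace Set
open scoped NNReal

theorem LipschitzWith.norm_le_mul_one_add_norm {E F : Type*} [SeminormedAddCommGroup E]
    [SeminormedAddCommGroup F] {K : ℝ≥0} {f : E → F} (hf : LipschitzWith K f) (x : E) :
    ‖f x‖ ≤ (K + ‖f 0‖₊ : ℝ≥0) * (1 + ‖x‖) := by
  have hlip : ‖f x - f 0‖ ≤ K * ‖x‖ := by simpa using hf.norm_sub_le x 0
  have htri := norm_le_norm_add_norm_sub' (f x) (f 0)
  push_cast
  nlinarith [norm_nonneg (f 0), norm_nonneg x, K.2]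

theorem gronwallBound_zero_le {K ε x : ℝ} (hK : 0 ≤ K) (hε : 0 ≤ ε) :
    gronwallBound 0 K ε x ≤ ε * x * Real.exp (K * x) := by
  rcases hK.eq_or_lt with rfl | hK
  · simp [gronwallBound_K0]
  simp only [gronwallBound_of_K_ne_0 hK.ne', zero_mul, zero_add]
  rw [div_mul_eq_mul_div, div_le_iff₀ hK]
  have hexp := mul_le_mul_of_nonneg_left (Real.add_one_le_exp (-(K * x))) (Real.exp_pos (K * x)).le
  rw [Real.exp_neg, mul_inv_cancel₀ (Real.exp_pos _).ne'] at hexp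
  have hexp' : Real.exp (K * x) - 1 ≤ K * x * Real.exp (K * x) := by linarith
  calc ε * (Real.exp (K * x) - 1) ≤ ε * (K * x * Real.exp (K * x)) := by gcongr
    _ = ε * x * Real.exp (K * x) * K := by ring

theorem integral_le_of_le_add_mul_integral {g : ℝ → ℝ} {a K t : ℝ} (hg : Continuous g)
    (ha : 0 ≤ a) (hK : 0 ≤ K) (ht : 0 ≤ t)
    (hle : ∀ s ∈ Ico 0 t, g s ≤ a * s + K * ∫ r in (0 : ℝ)..s, g r) :
    ∫ r in (0 : ℝ)..t, g r ≤ a * t ^ 2 * Real.exp (K * t) := by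
  have hderiv (s : ℝ) : HasDerivAt (fun u => ∫ r in (0 : ℝ)..u, g r) (g s) s :=
    intervalIntegral.integral_hasDerivAt_right (hg.intervalIntegrable _ _)
      hg.aestronglyMeasurable.stronglyMeasurableAtFilter hg.continuousAt
  have hgronwall := le_gronwallBound_of_liminf_deriv_right_le (f := fun u => ∫ r in (0 : ℝ)..u, g r)
    (fun s _ => (hderiv s).continuousAt.continuousWithinAt)
    (fun s _ _ hr => (hderiv s).hasDerivWithinAt.liminf_right_slope_le hr)
    (δ := 0) (K := K) (ε := a * t) (by simp)
    (fun s hs => by nlinarith [hle s hs, hs.2, hs.1]) t ⟨ht, le_rfl⟩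
  calc ∫ r in (0 : ℝ)..t, g r ≤ gronwallBound 0 K (a * t) t := by simpa using hgronwall
    _ ≤ a * t * t * Real.exp (K * t) := gronwallBound_zero_le hK (by positivity)
    _ = a * t ^ 2 * Real.exp (K * t) := by ring

section FirstOrderExpansion

variable {E : Type*} [NormedAddCommGroup E] [NormedSpace ℝ E] [CompleteSpace E]
  {T : E →L[ℝ] E} {B : ℝ} {F : E → E} {K : ℝ≥0} {W : ℝ → ℝ} {φ : ℝ → E} {ε : ℝ} {y : E}

-- `exp` needs a normed `ℚ`-algebra structure, which `E →L[ℝ] E` only gets by restricting scalars.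
@[fun_prop]
theorem Continuous.exp_smul {α : Type*} [TopologicalSpace α] {g : α → ℝ} (hg : Continuous g)
    (T : E →L[ℝ] E) : Continuous fun x => exp (g x • T) := by
  let +nondep : NormedAlgebra ℚ (E →L[ℝ] E) := .restrictScalars ℚ ℝ _
  exact exp_continuous.comp (hg.smul continuous_const)

theorem exp_add_smul (T : E →L[ℝ] E) (s t : ℝ) : exp ((s + t) • T) = exp (s • T) * exp (t • T) := by
  let +nondep : NormedAlgebra ℚ (E →L[ℝ] E) := .restrictScalars ℚ ℝ _
  rw [add_smul, exp_add_of_commute (((Commute.refl T).smul_left s).smul_right t)]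

theorem exists_norm_exp_smul_le_of_exp_eq_one (hT : exp T = 1) :
    ∃ B, ∀ c : ℝ, ‖exp (c • T)‖ ≤ B := by
  have hper : Function.Periodic (fun c : ℝ => exp (c • T)) 1 := fun c => by
    simp only [exp_add_smul, one_smul, hT, mul_one]
  obtain ⟨B, hB⟩ := isBounded_iff_forall_norm_le.1
    (hper.isBounded_of_continuous one_ne_zero (continuous_id.exp_smul T))
  exact ⟨B, fun c => hB _ ⟨c, rfl⟩⟩

variable (T F W ε y) in
def IsMildSolution (φ : ℝ → E) : Prop :=
  ∀ s, 0 ≤ s → φ s = exp (W s • T) y + ε • ∫ r in (0 : ℝ)..s, exp ((W s - W r) • T) (F (φ r))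

variable (T F W ε) in
/-- The paper's `ψ¹_{ε,t}(y)`. -/
noncomputable def firstOrderApprox (t : ℝ) (y : E) : E :=
  exp (W t • T) y + ε • exp (W t • T) (∫ r in (0 : ℝ)..t, exp ((-W r) • T) (F (exp (W r • T) y)))

theorem IsMildSolution.norm_sub_exp_smul_apply_le (hφ : IsMildSolution T F W ε y φ)
    (hB : ∀ c : ℝ, ‖exp (c • T)‖ ≤ B) (hF : ∀ x, ‖F x‖ ≤ K * (1 + ‖x‖)) (hW : Continuous W)
    (hφc : Continuous φ) (hε : 0 ≤ ε) {s : ℝ} (hs : 0 ≤ s) :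
    ‖φ s - exp (W s • T) y‖ ≤
      ε * B * K * (1 + B * ‖y‖) * s + ε * B * K * ∫ r in (0 : ℝ)..s, ‖φ r - exp (W r • T) y‖ := by
  have hB0 : 0 ≤ B := (norm_nonneg _).trans (hB 0)
  have hdev : Continuous fun r => ‖φ r - exp (W r • T) y‖ := by fun_prop
  have hintegrand (r : ℝ) : ‖exp ((W s - W r) • T) (F (φ r))‖ ≤
      B * K * (1 + B * ‖y‖) + B * K * ‖φ r - exp (W r • T) y‖ := by
    have hφr : ‖φ r‖ ≤ B * ‖y‖ + ‖φ r - exp (W r • T) y‖ :=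
      (norm_le_norm_add_norm_sub' _ (exp (W r • T) y)).trans
        (add_le_add_left (((exp (W r • T)).le_opNorm y).trans
          (mul_le_mul_of_nonneg_right (hB _) (norm_nonneg y))) _)
    calc ‖exp ((W s - W r) • T) (F (φ r))‖ ≤ B * (K * (1 + ‖φ r‖)) :=
          ((exp ((W s - W r) • T)).le_opNorm _).trans (mul_le_mul (hB _) (hF _) (norm_nonneg _) hB0)
      _ ≤ B * (K * (1 + (B * ‖y‖ + ‖φ r - exp (W r • T) y‖))) := by gcongr
      _ = _ := by ring
  calc ‖φ s - exp (W s • T) y‖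
      = ε * ‖∫ r in (0 : ℝ)..s, exp ((W s - W r) • T) (F (φ r))‖ := by
        rw [hφ s hs, add_sub_cancel_left, norm_smul, Real.norm_of_nonneg hε]
    _ ≤ ε * ∫ r in (0 : ℝ)..s, (B * K * (1 + B * ‖y‖) + B * K * ‖φ r - exp (W r • T) y‖) := by
        gcongr
        exact intervalIntegral.norm_integral_le_of_norm_le hs
          (Filter.Eventually.of_forall fun r _ => hintegrand r)
          ((continuous_const.add (continuous_const.mul hdev)).intervalIntegrable _ _)
    _ = _ := by
        rw [intervalIntegral.integral_add intervalIntegrable_const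
          ((hdev.const_mul _).intervalIntegrable _ _),
          intervalIntegral.integral_const, intervalIntegral.integral_const_mul, smul_eq_mul]
        ring

theorem IsMildSolution.integral_norm_sub_exp_smul_apply_le (hφ : IsMildSolution T F W ε y φ)
    (hB : ∀ c : ℝ, ‖exp (c • T)‖ ≤ B) (hF : ∀ x, ‖F x‖ ≤ K * (1 + ‖x‖)) (hW : Continuous W)
    (hφc : Continuous φ) (hε : 0 ≤ ε) {t : ℝ} (ht : 0 ≤ t) :
    ∫ r in (0 : ℝ)..t, ‖φ r - exp (W r • T) y‖ ≤
      ε * B * K * (1 + B * ‖y‖) * t ^ 2 * Real.exp (ε * B * K * t) := by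
  have hB0 : 0 ≤ B := (norm_nonneg _).trans (hB 0)
  exact integral_le_of_le_add_mul_integral (by fun_prop) (by positivity) (by positivity) ht
    fun s hs => hφ.norm_sub_exp_smul_apply_le hB hF hW hφc hε hs.1

theorem IsMildSolution.sub_firstOrderApprox_eq (hφ : IsMildSolution T F W ε y φ)
    (hFc : Continuous F) (hW : Continuous W) (hφc : Continuous φ) {t : ℝ} (ht : 0 ≤ t) :
    φ t - firstOrderApprox T F W ε t y =
      ε • ∫ r in (0 : ℝ)..t, exp ((W t - W r) • T) (F (φ r) - F (exp (W r • T) y)) := by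
  have hpull : exp (W t • T) (∫ r in (0 : ℝ)..t, exp ((-W r) • T) (F (exp (W r • T) y))) =
      ∫ r in (0 : ℝ)..t, exp ((W t - W r) • T) (F (exp (W r • T) y)) := by
    have hint : Continuous fun r => exp ((-W r) • T) (F (exp (W r • T) y)) := by fun_prop
    rw [← ContinuousLinearMap.intervalIntegral_comp_comm _ (hint.intervalIntegrable _ _)]
    simp_rw [sub_eq_add_neg, exp_add_smul, mul_apply_eq_comp]
  simp_rw [map_sub]
  rw [intervalIntegral.integral_sub ((by fun_prop : Continuous _).intervalIntegrable _ _)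
    ((by fun_prop : Continuous _).intervalIntegrable _ _), firstOrderApprox, hpull, hφ t ht,
    smul_sub]
  abel

theorem IsMildSolution.norm_sub_firstOrderApprox_le (hφ : IsMildSolution T F W ε y φ)
    (hB : ∀ c : ℝ, ‖exp (c • T)‖ ≤ B) (hFl : LipschitzWith K F) (hF : ∀ x, ‖F x‖ ≤ K * (1 + ‖x‖))
    (hW : Continuous W) (hφc : Continuous φ) (hε : 0 ≤ ε) {t : ℝ} (ht : 0 ≤ t) :
    ‖φ t - firstOrderApprox T F W ε t y‖ ≤
      (B * K) ^ 2 * (1 + B * ‖y‖) * Real.exp (B * K * ε * t) * (ε * t) ^ 2 := by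
  have hB0 : 0 ≤ B := (norm_nonneg _).trans (hB 0)
  have hintegrand (r : ℝ) : ‖exp ((W t - W r) • T) (F (φ r) - F (exp (W r • T) y))‖ ≤
      B * K * ‖φ r - exp (W r • T) y‖ :=
    ((exp ((W t - W r) • T)).le_opNorm _).trans <| by
      rw [mul_assoc]; exact mul_le_mul (hB _) (hFl.norm_sub_le _ _) (norm_nonneg _) hB0
  calc ‖φ t - firstOrderApprox T F W ε t y‖
      ≤ ε * ∫ r in (0 : ℝ)..t, B * K * ‖φ r - exp (W r • T) y‖ := by
        rw [hφ.sub_firstOrderApprox_eq hFl.continuous hW hφc ht, norm_smul,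
          Real.norm_of_nonneg hε]
        gcongr
        exact intervalIntegral.norm_integral_le_of_norm_le ht
          (Filter.Eventually.of_forall fun r _ => hintegrand r)
          ((by fun_prop : Continuous _).intervalIntegrable _ _)
    _ ≤ ε * (B * K * (ε * B * K * (1 + B * ‖y‖) * t ^ 2 * Real.exp (ε * B * K * t))) := by
        rw [intervalIntegral.integral_const_mul]
        gcongr
        exact hφ.integral_norm_sub_exp_smul_apply_le hB hF hW hφc hε ht
    _ = _ := by ring_nf

end FirstOrderExpansion

theorem toEuclideanCLM_exp {d : ℕ} (M : Matrix (Fin d) (Fin d) ℝ) :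
    Matrix.toEuclideanCLM (𝕜 := ℝ) (exp M) = exp (Matrix.toEuclideanCLM (𝕜 := ℝ) M) :=
  open scoped Matrix.Norms.Operator in
  map_exp (Matrix.toEuclideanCLM (𝕜 := ℝ) (n := Fin d)) (LinearMap.continuous_of_finiteDimensional
    (Matrix.toEuclideanCLM (𝕜 := ℝ) (n := Fin d)).toAlgEquiv.toLinearMap) M

theorem matApply_exp_smul {d : ℕ} (A : Matrix (Fin d) (Fin d) ℝ) (c : ℝ)
    (x : EuclideanSpace ℝ (Fin d)) :
    matApply (exp (c • A)) x = exp (c • Matrix.toEuclideanCLM (𝕜 := ℝ) A) x := by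
  rw [← map_smul, ← toEuclideanCLM_exp]
  rfl

theorem first_order_taylor_error_general (d : ℕ)
    (A : Matrix (Fin d) (Fin d) ℝ) (hA : exp A = 1)
    (F : EuclideanSpace ℝ (Fin d) → EuclideanSpace ℝ (Fin d)) (L : ℝ)
    (hFlip : ∀ y₁ y₂, ‖F y₁ - F y₂‖ ≤ L * ‖y₁ - y₂‖) :
    ∃ C : ℝ, 0 < C ∧
      ∀ (ε : ℝ), 0 < ε → ∀ (W : ℝ → ℝ), Continuous W →
        ∀ (φ : ℝ → EuclideanSpace ℝ (Fin d) → EuclideanSpace ℝ (Fin d)),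
          (∀ y, Continuous fun s => φ s y) →
          (∀ (t : ℝ) (y : EuclideanSpace ℝ (Fin d)), 0 ≤ t →
            φ t y = matApply (exp (W t • A)) y +
              ε • ∫ s in (0 : ℝ)..t, matApply (exp ((W t - W s) • A)) (F (φ s y))) →
          ∀ (t : ℝ) (y : EuclideanSpace ℝ (Fin d)), 0 ≤ t →
            ‖φ t y -
              (matApply (exp (W t • A)) y +
                ε • matApply (exp (W t • A))
                  (∫ s in (0 : ℝ)..t,
                    matApply (exp ((-W s) • A)) (F (matApply (exp (W s • A)) y))))‖ ≤
              C * (1 + ‖y‖) * Real.exp (C * ε * t) * (ε * t) ^ 2 := by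
  set T := Matrix.toEuclideanCLM (𝕜 := ℝ) A
  obtain ⟨B, hB⟩ := exists_norm_exp_smul_le_of_exp_eq_one (T := T)
    (by rw [← toEuclideanCLM_exp, hA, map_one])
  set B₁ := max B 1
  have hB₁ : 1 ≤ B₁ := le_max_right _ _
  have hTB₁ (c : ℝ) : ‖exp (c • T)‖ ≤ B₁ := (hB c).trans (le_max_left _ _)
  have hFl : LipschitzWith L.toNNReal F := .of_dist_le' fun y₁ y₂ => by
    simpa only [dist_eq_norm] using hFlip y₁ y₂
  set K : ℝ≥0 := L.toNNReal + ‖F 0‖₊ + 1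
  have hK : 1 ≤ (K : ℝ) := by exact_mod_cast le_add_self
  have hF (x : EuclideanSpace ℝ (Fin d)) : ‖F x‖ ≤ K * (1 + ‖x‖) :=
    (hFl.norm_le_mul_one_add_norm x).trans (by gcongr; exact le_self_add)
  refine ⟨B₁ ^ 3 * K ^ 2, by positivity, fun ε hε W hW φ hφc hφ t y ht => ?_⟩
  simp only [matApply_exp_smul] at hφ ⊢
  have hmild : IsMildSolution T F W ε y (φ · y) := fun s hs => hφ s y hs
  refine (hmild.norm_sub_firstOrderApprox_le hTB₁
    (hFl.weaken (le_self_add.trans le_self_add)) hF hW (hφc y) hε.le ht).trans ?_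
  have hBK : B₁ * K ≤ B₁ ^ 3 * K ^ 2 := by
    nlinarith [one_le_mul_of_one_le_of_one_le (one_le_pow₀ (n := 2) hB₁) hK]
  have hεt : 0 ≤ ε * t := by positivity
  gcongr ?_ * Real.exp ?_ * _
  · nlinarith [norm_nonneg y]
  · rw [mul_assoc, mul_assoc (B₁ ^ 3 * _)]
    exact mul_le_mul_of_nonneg_right hBK hεt

/-- First-order Taylor (in `ε`) approximation error: with
`ψ¹ t y = e^{A W(t)} y + ε e^{A W(t)} ∫₀ᵗ e^{−A W(s)} F(e^{A W(s)} y) ds`,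
one has `‖φ t y − ψ¹ t y‖ ≤ C (1 + ‖y‖) e^{C ε t} (ε t)²` with `C` independent of `ε`, `t`. -/
theorem first_order_taylor_error (d : ℕ)
    (A : Matrix (Fin d) (Fin d) ℝ) (hA : exp A = 1)
    (F : EuclideanSpace ℝ (Fin d) → EuclideanSpace ℝ (Fin d)) (L : ℝ)
    (hFlip : ∀ y₁ y₂, ‖F y₁ - F y₂‖ ≤ L * ‖y₁ - y₂‖)
    (hFgrowth : ∀ y, ‖F y‖ ≤ L * (1 + ‖y‖)) :
    ∃ C : ℝ, 0 < C ∧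
      ∀ (ε : ℝ), 0 < ε → ∀ (W : ℝ → ℝ), Continuous W →
        ∀ (φ : ℝ → EuclideanSpace ℝ (Fin d) → EuclideanSpace ℝ (Fin d)),
          (∀ y, Continuous fun s => φ s y) →
          (∀ (t : ℝ) (y : EuclideanSpace ℝ (Fin d)), 0 ≤ t →
            φ t y = matApply (exp (W t • A)) y +
              ε • ∫ s in (0 : ℝ)..t, matApply (exp ((W t - W s) • A)) (F (φ s y))) →
          ∀ (t : ℝ) (y : EuclideanSpace ℝ (Fin d)), 0 ≤ t →
            ‖φ t y -
              (matApply (exp (W t • A)) y +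
                ε • matApply (exp (W t • A))
                  (∫ s in (0 : ℝ)..t,
                    matApply (exp ((-W s) • A)) (F (matApply (exp (W s • A)) y))))‖ ≤
              C * (1 + ‖y‖) * Real.exp (C * ε * t) * (ε * t) ^ 2 :=
  first_order_taylor_error_general d A hA F L hFlip
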